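/- For any continuously differentiable function w on [0,1], one has -‖w'‖_{L^2(0,1)}^2 ≤ (1/2) w(1)^2 - (1/4) ‖w‖_{L^2(0,1)}^2. -/

import Mathlib

/-!
Integrate the derivative of `x ↦ x * w x ^ 2` over `[0, 1]`: this gives
`w 1 ^ 2 = ∫ (w² + 2 x w w')`, and for `0 ≤ x ≤ 1` the integrand is at least `w² / 2 - 2 w'²`
because `2 |w w'| ≤ w² / 2 + 2 w'²` (AM-GM).
-/

open intervalIntegral

lemma sq_div_two_sub_two_mul_sq_le {t : ℝ} (ht₀ : 0 ≤ t) (ht₁ : t ≤ 1) (a b : ℝ) :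
    a ^ 2 / 2 - 2 * b ^ 2 ≤ a ^ 2 + 2 * t * a * b := by
  nlinarith [mul_nonneg ht₀ (sq_nonneg (a + 2 * b)), mul_nonneg (sub_nonneg.2 ht₁) (sq_nonneg a),
    mul_nonneg (sub_nonneg.2 ht₁) (sq_nonneg b)]

section ContDiff

variable {w : ℝ → ℝ}

lemma ContDiff.integral_sq_add_two_mul_mul_deriv (hw : ContDiff ℝ 1 w) (a b : ℝ) :
    ∫ x in a..b, (w x ^ 2 + 2 * x * w x * deriv w x) = b * w b ^ 2 - a * w a ^ 2 := by
  have hd : Differentiable ℝ w := hw.differentiable one_ne_zero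
  have hw' : Continuous (deriv w) := hw.continuous_deriv le_rfl
  have hcont : Continuous fun x => w x ^ 2 + 2 * x * w x * deriv w x := by fun_prop
  refine integral_eq_sub_of_hasDerivAt (f := fun x => x * w x ^ 2) (fun x _ => ?_)
    (hcont.intervalIntegrable a b)
  refine ((hasDerivAt_id' x).mul ((hd x).hasDerivAt.pow 2)).congr_deriv ?_
  simp only [Pi.pow_apply, Nat.cast_ofNat]
  ring

lemma ContDiff.integral_sq_le_sq_add_integral_deriv_sq (hw : ContDiff ℝ 1 w) :
    (1 / 2) * ∫ x in (0 : ℝ)..1, w x ^ 2 ≤ w 1 ^ 2 + 2 * ∫ x in (0 : ℝ)..1, deriv w x ^ 2 := by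
  have hw' : Continuous (deriv w) := hw.continuous_deriv le_rfl
  have hwc : Continuous w := hw.continuous
  calc (1 / 2) * ∫ x in (0 : ℝ)..1, w x ^ 2
      = 2 * (∫ x in (0 : ℝ)..1, deriv w x ^ 2) +
          ∫ x in (0 : ℝ)..1, (w x ^ 2 / 2 - 2 * deriv w x ^ 2) := by
        rw [integral_sub, integral_div, integral_const_mul]
        · ring
        all_goals exact Continuous.intervalIntegrable (by fun_prop) 0 1
    _ ≤ 2 * (∫ x in (0 : ℝ)..1, deriv w x ^ 2) +
          ∫ x in (0 : ℝ)..1, (w x ^ 2 + 2 * x * w x * deriv w x) := by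
        gcongr
        refine integral_mono_on zero_le_one (Continuous.intervalIntegrable (by fun_prop) 0 1)
          (Continuous.intervalIntegrable (by fun_prop) 0 1) fun x hx => ?_
        exact sq_div_two_sub_two_mul_sq_le hx.1 hx.2 _ _
    _ = w 1 ^ 2 + 2 * ∫ x in (0 : ℝ)..1, deriv w x ^ 2 := by
        rw [hw.integral_sq_add_two_mul_mul_deriv]
        ring

end ContDiff

/-- Poincaré-type inequality with boundary term at `x = 1`:
`-‖w'‖² ≤ (1/2) w(1)² - (1/4) ‖w‖²` for `w ∈ C¹([0,1])`. -/
theorem poincare_with_boundary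
    (w : ℝ → ℝ) (hw : ContDiff ℝ 1 w) :
    -(∫ x in (0:ℝ)..1, (deriv w x)^2) ≤
      (1/2) * (w 1)^2 - (1/4) * ∫ x in (0:ℝ)..1, (w x)^2 := by
  linarith [hw.integral_sq_le_sq_add_integral_deriv_sq]
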